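/- arXiv:2601.11648 — 6 statements merged into one kernel-verified Lean document; each statement's English description precedes it below -/
import Mathlib

section
/- For every integer m > 1 and every point p in the zero set e_m⁻¹(0), the Fréchet derivative of e_m at p is nonzero (so 0 is a regular value of e_m and e_m⁻¹(0) is a smooth hypersurface of dimension m). -/
/-! On the zero set, either some `y_j ≠ 0`, and then `∂e/∂y_j = -2 y_j ≠ 0`, or `y = 0`, and then
`x₁` is a root of `(x₁ - c₁₀)(c₂₀ - x₁)`; since `c₁₀ < c₂₀` these roots are simple, so
`∂e/∂x₁ = c₁₀ + c₂₀ - 2 x₁ = ±(c₂₀ - c₁₀) ≠ 0`. -/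

noncomputable def c10 (x : ℝ) : ℝ := (Real.sin x) ^ 2 / (2 * (x ^ 2 + 1))

noncomputable def c20 (x : ℝ) : ℝ := 1 / (x ^ 2 + 1)

noncomputable def e (m : ℕ) : ℝ × ℝ × (Fin (m - 1) → ℝ) → ℝ :=
  fun p => (p.1 - c10 p.2.1) * (c20 p.2.1 - p.1) - ∑ j, (p.2.2 j) ^ 2

theorem fderiv_ne_zero_of_hasLineDerivAt {𝕜 E F : Type*} [NontriviallyNormedField 𝕜]
    [NormedAddCommGroup E] [NormedSpace 𝕜 E] [NormedAddCommGroup F] [NormedSpace 𝕜 F]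
    {f : E → F} {x v : E} {f' : F} (hf : DifferentiableAt 𝕜 f x)
    (hfv : HasLineDerivAt 𝕜 f f' x v) (hf' : f' ≠ 0) : fderiv 𝕜 f x ≠ 0 := by
  intro h
  apply hf'
  simpa [h] using hfv.unique (hf.hasFDerivAt.hasLineDerivAt v)

theorem c10_lt_c20 (x : ℝ) : c10 x < c20 x := by
  have hpos : (0 : ℝ) < x ^ 2 + 1 := by positivity
  rw [c10, c20, div_lt_div_iff₀ (by positivity) hpos]
  nlinarith [Real.sin_sq_le_one x]

@[fun_prop]
theorem differentiable_c10 : Differentiable ℝ c10 := by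
  unfold c10
  fun_prop (disch := intro; positivity)

@[fun_prop]
theorem differentiable_c20 : Differentiable ℝ c20 := by
  unfold c20
  fun_prop (disch := intro; positivity)

theorem differentiable_e (m : ℕ) : Differentiable ℝ (e m) := by
  unfold e
  fun_prop

theorem hasLineDerivAt_e_fst (m : ℕ) (x₁ x₂ : ℝ) (y : Fin (m - 1) → ℝ) :
    HasLineDerivAt ℝ (e m) (c10 x₂ + c20 x₂ - 2 * x₁) (x₁, x₂, y) (1, 0, 0) := by
  have hx : HasDerivAt (fun t : ℝ => x₁ + t) 1 0 := (hasDerivAt_id _).const_add x₁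
  have h := ((hx.sub_const (c10 x₂)).mul (hx.const_sub (c20 x₂))).sub_const (∑ j, y j ^ 2)
  unfold HasLineDerivAt
  convert h using 1
  · ext t; simp [e]
  · ring

theorem hasLineDerivAt_e_snd_snd (m : ℕ) (x₁ x₂ : ℝ) (y : Fin (m - 1) → ℝ) (j : Fin (m - 1)) :
    HasLineDerivAt ℝ (e m) (-2 * y j) (x₁, x₂, y) (0, 0, Pi.single j 1) := by
  set u : Fin (m - 1) → ℝ := Pi.single j 1
  have hsq : ∀ k, HasDerivAt (fun t : ℝ => (y k + t * u k) ^ 2) (2 * y k * u k) 0 := fun k => by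
    simpa using (((hasDerivAt_id (0 : ℝ)).mul_const (u k)).const_add (y k)).fun_pow 2
  have h := (HasDerivAt.fun_sum (u := Finset.univ) fun k _ => hsq k).const_sub
    ((x₁ - c10 x₂) * (c20 x₂ - x₁))
  unfold HasLineDerivAt
  convert h using 1
  · ext t; simp [e]
  · simp [u, Pi.single_apply]

theorem stmt2_general (m : ℕ) (p : ℝ × ℝ × (Fin (m - 1) → ℝ))
    (hp : e m p = 0) : fderiv ℝ (e m) p ≠ 0 := by
  obtain ⟨x₁, x₂, y⟩ := p
  by_cases hy : y = 0
  · subst hy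
    refine fderiv_ne_zero_of_hasLineDerivAt (differentiable_e m _)
      (hasLineDerivAt_e_fst m x₁ x₂ 0) ?_
    have hroot : (x₁ - c10 x₂) * (c20 x₂ - x₁) = 0 := by simpa [e] using hp
    have hlt := c10_lt_c20 x₂
    rcases mul_eq_zero.1 hroot with h | h <;> intro h' <;> linarith
  · obtain ⟨j, hj⟩ := Function.ne_iff.1 hy
    exact fderiv_ne_zero_of_hasLineDerivAt (differentiable_e m _)
      (hasLineDerivAt_e_snd_snd m x₁ x₂ y j) (by simpa using hj)

theorem stmt2 (m : ℕ) (hm : 1 < m) (p : ℝ × ℝ × (Fin (m - 1) → ℝ))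
    (hp : e m p = 0) : fderiv ℝ (e m) p ≠ 0 :=
  stmt2_general m p hp
end

section
/- For every integer m > 1, the image of the first-coordinate projection restricted to the zero set of e_m equals the closed interval [0, 1]; that is, {x₁ ∈ ℝ : ∃ x₂ ∈ ℝ, ∃ y : Fin (m−1) → ℝ, e_m(x₁, x₂, y) = 0} = [0, 1]. -/
/-!
Since a sum of `m - 1 ≥ 1` squares takes every nonnegative value, the fibre of the projection over
`x₂` is `{x₁ | (x₁ - c10 x₂) * (c20 x₂ - x₁) ≥ 0} = [c10 x₂, c20 x₂]`. These intervals lie in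
`[0, 1]` because `0 ≤ c10 ≤ c20 ≤ 1`, and at `x₂ = 0` the fibre is all of `[0, 1]`.
-/

lemma mem_Icc_of_mul_sub_nonneg {a b x : ℝ} (hab : a ≤ b) (h : 0 ≤ (x - a) * (b - x)) :
    x ∈ Set.Icc a b := by
  constructor <;> nlinarith

lemma exists_sum_sq_eq {ι : Type*} [Fintype ι] [Nonempty ι] {t : ℝ} (ht : 0 ≤ t) :
    ∃ y : ι → ℝ, ∑ i, y i ^ 2 = t := by
  classical
  obtain ⟨i⟩ := ‹Nonempty ι›
  refine ⟨Pi.single i (Real.sqrt t), ?_⟩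
  rw [Finset.sum_eq_single i (fun j _ hj => by simp [hj]) (by simp)]
  simp [Real.sq_sqrt ht]

lemma c10_nonneg (x : ℝ) : 0 ≤ c10 x := by
  unfold c10; positivity

lemma c20_le_one (x : ℝ) : c20 x ≤ 1 := by
  unfold c20
  rw [div_le_one (by positivity)]
  nlinarith [sq_nonneg x]

lemma c10_le_c20 (x : ℝ) : c10 x ≤ c20 x := by
  unfold c10 c20
  rw [div_le_div_iff₀ (by positivity) (by positivity)]
  nlinarith [Real.sin_sq_le_one x, sq_nonneg x]

theorem stmt4 (m : ℕ) (hm : 1 < m) :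
    {x₁ : ℝ | ∃ x₂ : ℝ, ∃ y : Fin (m - 1) → ℝ, e m (x₁, x₂, y) = 0} =
      Set.Icc (0 : ℝ) 1 := by
  ext x₁
  constructor
  · rintro ⟨x₂, y, he⟩
    have hprod : 0 ≤ (x₁ - c10 x₂) * (c20 x₂ - x₁) := by
      rw [e, sub_eq_zero] at he
      rw [he]
      exact Finset.sum_nonneg fun j _ => sq_nonneg (y j)
    exact Set.Icc_subset_Icc (c10_nonneg x₂) (c20_le_one x₂)
      (mem_Icc_of_mul_sub_nonneg (c10_le_c20 x₂) hprod)
  · rintro ⟨h0, h1⟩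
    have : Nonempty (Fin (m - 1)) := ⟨⟨0, by omega⟩⟩
    obtain ⟨y, hy⟩ := exists_sum_sq_eq (ι := Fin (m - 1)) (mul_nonneg h0 (sub_nonneg.mpr h1))
    refine ⟨0, y, ?_⟩
    simp [e, c10, c20, hy]
end

section
/- For every natural number n, the n-th iterated derivative of c₀ at 0 equals 0. -/
/-!
Away from the origin every derivative of `c0` has the form `exp (-1 / x ^ 2) * g x` with `g` in
the algebra generated by `x`, `x⁻¹`, `sin x⁻¹` and `cos x⁻¹`: this algebra is closed under
differentiation and under multiplication by `x⁻¹ ^ 3`, the factor produced by differentiating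
`exp (-1 / x ^ 2)`. Its elements grow at most like a power of `x⁻¹ ^ 2` near `0`, which
`exp (-1 / x ^ 2)` beats, so every difference quotient at `0` tends to `0`.
-/

noncomputable def c0 (x : ℝ) : ℝ :=
  if x = 0 then 0 else Real.exp (-1 / x ^ 2) * x * (Real.sin (1 / x)) ^ 2

open Real Filter Topology Asymptotics

def polyGrowth {α : Type*} (l : Filter α) {u : α → ℝ} (hu : Tendsto u l atTop) :
    Subalgebra ℝ (α → ℝ) where
  carrier := {g | ∃ m : ℕ, g =O[l] fun x => u x ^ m}
  mul_mem' := by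
    rintro f g ⟨m, hf⟩ ⟨n, hg⟩
    exact ⟨m + n, (hf.mul hg).congr_right fun x => (pow_add (u x) m n).symm⟩
  add_mem' := by
    rintro f g ⟨m, hf⟩ ⟨n, hg⟩
    have hu' := hu.mono_right IsOrderBornology.atTop_le_cobounded
    exact ⟨max m n,
      (hf.trans ((isBigO_pow_pow_cobounded_of_le (le_max_left m n)).comp_tendsto hu')).add
        (hg.trans ((isBigO_pow_pow_cobounded_of_le (le_max_right m n)).comp_tendsto hu'))⟩
  algebraMap_mem' c := ⟨0, by simpa using isBigO_const_one ℝ c l⟩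

section polyGrowth

variable {α : Type*} {l : Filter α} {u : α → ℝ} (hu : Tendsto u l atTop)

theorem mem_polyGrowth_of_isBigO_one {g : α → ℝ} (hg : g =O[l] fun _ => (1 : ℝ)) :
    g ∈ polyGrowth l hu :=
  ⟨0, by simpa using hg⟩

theorem self_mem_polyGrowth : u ∈ polyGrowth l hu :=
  ⟨1, by simpa using isBigO_refl u l⟩

theorem tendsto_exp_neg_mul_of_mem_polyGrowth {g : α → ℝ} (hg : g ∈ polyGrowth l hu) :
    Tendsto (fun x => exp (-u x) * g x) l (𝓝 0) := by
  obtain ⟨m, hm⟩ := hg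
  have hlim : Tendsto (fun x => u x ^ m * exp (-u x)) l (𝓝 0) :=
    (tendsto_pow_mul_exp_neg_atTop_nhds_zero m).comp hu
  refine ((isBigO_refl (fun x => exp (-u x)) l).mul hm).trans_tendsto ?_
  simpa only [mul_comm] using hlim

end polyGrowth

theorem tendsto_inv_sq_nhdsNE_zero : Tendsto (fun x : ℝ => x⁻¹ ^ 2) (𝓝[≠] 0) atTop := by
  refine ((tendsto_pow_atTop two_ne_zero).comp tendsto_norm_inv_nhdsNE_zero_atTop).congr fun x => ?_
  simp

theorem id_mem_polyGrowth_inv_sq :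
    (fun x : ℝ => x) ∈ polyGrowth (𝓝[≠] 0) tendsto_inv_sq_nhdsNE_zero :=
  mem_polyGrowth_of_isBigO_one _
    (((continuous_id.tendsto 0).mono_left nhdsWithin_le_nhds).isBigO_one (F := ℝ))

theorem inv_mem_polyGrowth_inv_sq :
    (fun x : ℝ => x⁻¹) ∈ polyGrowth (𝓝[≠] 0) tendsto_inv_sq_nhdsNE_zero := by
  have hinv : (fun x : ℝ => x⁻¹) = (fun x => x) * fun x => x⁻¹ ^ 2 := by
    funext x
    show x⁻¹ = x * x⁻¹ ^ 2
    rcases eq_or_ne x 0 with rfl | hx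
    · simp
    · rw [sq, ← mul_assoc, mul_inv_cancel₀ hx, one_mul]
  rw [hinv]
  exact mul_mem id_mem_polyGrowth_inv_sq (self_mem_polyGrowth _)

def sinCosInvAlgebra : Subalgebra ℝ (ℝ → ℝ) :=
  Algebra.adjoin ℝ {fun x => x, fun x => x⁻¹, fun x => sin x⁻¹, fun x => cos x⁻¹}

theorem inv_mem_sinCosInvAlgebra : (fun x : ℝ => x⁻¹) ∈ sinCosInvAlgebra :=
  Algebra.subset_adjoin (by simp)

theorem sinCosInvAlgebra_le_polyGrowth :
    sinCosInvAlgebra ≤ polyGrowth (𝓝[≠] 0) tendsto_inv_sq_nhdsNE_zero := by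
  refine Algebra.adjoin_le ?_
  rintro _ (rfl | rfl | rfl | rfl)
  · exact id_mem_polyGrowth_inv_sq
  · exact inv_mem_polyGrowth_inv_sq
  · exact mem_polyGrowth_of_isBigO_one _ <| .of_bound 1 <| .of_forall fun x => by
      simpa using abs_sin_le_one x⁻¹
  · exact mem_polyGrowth_of_isBigO_one _ <| .of_bound 1 <| .of_forall fun x => by
      simpa using abs_cos_le_one x⁻¹

theorem exists_hasDerivAt_mem_sinCosInvAlgebra {g : ℝ → ℝ} (hg : g ∈ sinCosInvAlgebra) :
    ∃ g' ∈ sinCosInvAlgebra, ∀ x ≠ 0, HasDerivAt g (g' x) x := by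
  have hinv := inv_mem_sinCosInvAlgebra
  have hsin : (fun x : ℝ => sin x⁻¹) ∈ sinCosInvAlgebra := Algebra.subset_adjoin (by simp)
  have hcos : (fun x : ℝ => cos x⁻¹) ∈ sinCosInvAlgebra := Algebra.subset_adjoin (by simp)
  induction hg using Algebra.adjoin_induction with
  | mem g hg =>
    rcases hg with rfl | rfl | rfl | rfl
    · exact ⟨1, one_mem _, fun x _ => hasDerivAt_id' x⟩
    · exact ⟨-(fun x => x⁻¹) ^ 2, neg_mem (pow_mem hinv 2), fun x hx => by
        simpa using hasDerivAt_inv hx⟩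
    · exact ⟨(fun x => cos x⁻¹) * -(fun x => x⁻¹) ^ 2, mul_mem hcos (neg_mem (pow_mem hinv 2)),
        fun x hx => by simpa using (hasDerivAt_inv hx).sin⟩
    · exact ⟨-(fun x => sin x⁻¹) * -(fun x => x⁻¹) ^ 2,
        mul_mem (neg_mem hsin) (neg_mem (pow_mem hinv 2)),
        fun x hx => by simpa using (hasDerivAt_inv hx).cos⟩
  | algebraMap c => exact ⟨0, zero_mem _, fun x _ => hasDerivAt_const x c⟩
  | add f g _ _ hf hg =>
    obtain ⟨f', hf'A, hf'⟩ := hf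
    obtain ⟨g', hg'A, hg'⟩ := hg
    exact ⟨f' + g', add_mem hf'A hg'A, fun x hx => (hf' x hx).add (hg' x hx)⟩
  | mul f g hfA hgA hf hg =>
    obtain ⟨f', hf'A, hf'⟩ := hf
    obtain ⟨g', hg'A, hg'⟩ := hg
    exact ⟨f' * g + f * g', add_mem (mul_mem hf'A hgA) (mul_mem hfA hg'A),
      fun x hx => (hf' x hx).mul (hg' x hx)⟩

theorem hasDerivAt_exp_neg_one_div_sq_mul {g : ℝ → ℝ} {g' x : ℝ} (hx : x ≠ 0)
    (hg : HasDerivAt g g' x) :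
    HasDerivAt (fun y => exp (-1 / y ^ 2) * g y)
      (exp (-1 / x ^ 2) * (2 * x⁻¹ ^ 3 * g x + g')) x := by
  have hq : HasDerivAt (fun y : ℝ => -1 / y ^ 2) (2 * x⁻¹ ^ 3) x := by
    refine ((hasDerivAt_const x (-1 : ℝ)).fun_div (hasDerivAt_pow 2 x)
      (pow_ne_zero 2 hx)).congr_deriv ?_
    field_simp
    ring
  exact (hq.exp.mul hg).congr_deriv (by ring)

theorem hasDerivAt_zero_of_eq_exp_mul {f g : ℝ → ℝ}
    (hg : g ∈ polyGrowth (𝓝[≠] 0) tendsto_inv_sq_nhdsNE_zero) (hf0 : f 0 = 0)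
    (hf : ∀ x ≠ 0, f x = exp (-1 / x ^ 2) * g x) : HasDerivAt f 0 0 := by
  have hslope : (fun x => x⁻¹ * g x) ∈ polyGrowth (𝓝[≠] 0) tendsto_inv_sq_nhdsNE_zero :=
    mul_mem inv_mem_polyGrowth_inv_sq hg
  rw [hasDerivAt_iff_tendsto_slope]
  refine (tendsto_exp_neg_mul_of_mem_polyGrowth _ hslope).congr' ?_
  filter_upwards [self_mem_nhdsWithin] with x (hx : x ≠ 0)
  rw [slope_def_field, hf x hx, hf0, sub_zero, sub_zero, neg_div, one_div, inv_pow]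
  field_simp

theorem iteratedDeriv_eq_zero_of_eq_exp_mul (n : ℕ) {f g : ℝ → ℝ} (hg : g ∈ sinCosInvAlgebra)
    (hf0 : f 0 = 0) (hf : ∀ x ≠ 0, f x = exp (-1 / x ^ 2) * g x) : iteratedDeriv n f 0 = 0 := by
  induction n generalizing f g with
  | zero => simpa using hf0
  | succ n ih =>
    obtain ⟨g', hg'A, hg'⟩ := exists_hasDerivAt_mem_sinCosInvAlgebra hg
    have hderiv (x : ℝ) (hx : x ≠ 0) :
        HasDerivAt f (exp (-1 / x ^ 2) * (2 * x⁻¹ ^ 3 * g x + g' x)) x := by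
      refine (hasDerivAt_exp_neg_one_div_sq_mul hx (hg' x hx)).congr_of_eventuallyEq ?_
      filter_upwards [isOpen_ne.mem_nhds hx] with y hy using hf y hy
    have hnext : (2 : ℝ) • (fun x => x⁻¹) ^ 3 * g + g' ∈ sinCosInvAlgebra :=
      add_mem (mul_mem (Subalgebra.smul_mem _ (pow_mem inv_mem_sinCosInvAlgebra 3) 2) hg) hg'A
    rw [iteratedDeriv_succ']
    exact ih hnext (hasDerivAt_zero_of_eq_exp_mul (sinCosInvAlgebra_le_polyGrowth hg) hf0 hf).deriv
      fun x hx => (hderiv x hx).deriv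

theorem stmt11 (n : ℕ) : iteratedDeriv n c0 0 = 0 := by
  have hg : (fun x : ℝ => x) * (fun x => sin x⁻¹) ^ 2 ∈ sinCosInvAlgebra :=
    mul_mem (Algebra.subset_adjoin (by simp)) (pow_mem (Algebra.subset_adjoin (by simp)) 2)
  refine iteratedDeriv_eq_zero_of_eq_exp_mul n hg (by simp [c0]) fun x hx => ?_
  simp only [c0, hx, ↓reduceIte, one_div, Pi.mul_apply, Pi.pow_apply]
  ring
end

section
/- For every ε > 0 there exists x with 0 < x < ε, deriv c₀ (x) = 0, and c₀(x) > 0; that is, the critical points of c₀ with positive critical value accumulate at 0. -/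
open Real Set

theorem exists_isLocalMax_of_lt_of_lt {f : ℝ → ℝ} {a b c : ℝ} (hf : ContinuousOn f (Icc a b))
    (hc : c ∈ Icc a b) (hac : f a < f c) (hbc : f b < f c) :
    ∃ x ∈ Ioo a b, IsLocalMax f x ∧ f c ≤ f x := by
  obtain ⟨x, hx, hmax⟩ := isCompact_Icc.exists_isMaxOn ⟨c, hc⟩ hf
  have hcx : f c ≤ f x := hmax hc
  have hax : a ≠ x := by rintro rfl; exact (hac.trans_le hcx).false
  have hbx : x ≠ b := by rintro rfl; exact (hbc.trans_le hcx).false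
  have hxIoo : x ∈ Ioo a b := ⟨lt_of_le_of_ne hx.1 hax, lt_of_le_of_ne hx.2 hbx⟩
  exact ⟨x, hxIoo, hmax.isLocalMax (Icc_mem_nhds hxIoo.1 hxIoo.2), hcx⟩

theorem c0_of_ne_zero {x : ℝ} (hx : x ≠ 0) : c0 x = exp (-1 / x ^ 2) * x * sin (1 / x) ^ 2 :=
  if_neg hx

theorem c0_eq_zero_of_sin_eq_zero {x : ℝ} (h : sin (1 / x) = 0) : c0 x = 0 := by
  rcases eq_or_ne x 0 with rfl | hx
  · exact if_pos rfl
  · rw [c0_of_ne_zero hx, h]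
    ring

theorem c0_pos {x : ℝ} (hx : 0 < x) (h : sin (1 / x) ≠ 0) : 0 < c0 x := by
  rw [c0_of_ne_zero hx.ne']
  positivity

theorem continuousOn_c0 : ContinuousOn c0 (Ioi 0) := by
  have hg : ContinuousOn (fun x : ℝ => exp (-1 / x ^ 2) * x * sin (1 / x) ^ 2) (Ioi 0) := by
    refine ContinuousOn.mul (ContinuousOn.mul ?_ continuousOn_id) ?_
    · exact continuous_exp.comp_continuousOn
        (continuousOn_const.div (continuousOn_id.pow 2) fun x hx => pow_ne_zero 2 (ne_of_gt hx))
    · exact (continuous_sin.comp_continuousOn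
        (continuousOn_const.div continuousOn_id fun x hx => ne_of_gt hx)).pow 2
  exact hg.congr fun x hx => c0_of_ne_zero (ne_of_gt hx)

theorem c0_inv_nat_mul_pi (n : ℕ) : c0 (n * π)⁻¹ = 0 :=
  c0_eq_zero_of_sin_eq_zero (by rw [one_div, inv_inv, sin_nat_mul_pi])

theorem c0_inv_nat_add_half_mul_pi_pos (n : ℕ) : 0 < c0 ((n + 1 / 2) * π)⁻¹ := by
  refine c0_pos (by positivity) ?_
  rw [one_div, inv_inv, add_mul, one_div_mul_eq_div, sin_add_pi_div_two, cos_nat_mul_pi]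
  exact pow_ne_zero n (by norm_num)

theorem exists_deriv_c0_eq_zero_mem_Ioo (n : ℕ) (hn : 0 < n) :
    ∃ x ∈ Ioo ((n + 1 : ℕ) * π)⁻¹ (n * π)⁻¹, deriv c0 x = 0 ∧ 0 < c0 x := by
  have hn' : (0 : ℝ) < n := Nat.cast_pos.mpr hn
  have hmid : ((n + 1 / 2) * π)⁻¹ ∈ Icc ((n + 1 : ℕ) * π)⁻¹ (n * π)⁻¹ := by
    push_cast
    constructor <;> gcongr <;> linarith
  have hcont : ContinuousOn c0 (Icc ((n + 1 : ℕ) * π)⁻¹ (n * π)⁻¹) :=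
    continuousOn_c0.mono fun x hx => lt_of_lt_of_le (by positivity) hx.1
  have hpos := c0_inv_nat_add_half_mul_pi_pos n
  obtain ⟨x, hx, hmax, hle⟩ := exists_isLocalMax_of_lt_of_lt hcont hmid
    (by rwa [c0_inv_nat_mul_pi]) (by rwa [c0_inv_nat_mul_pi])
  exact ⟨x, hx, hmax.deriv_eq_zero, hpos.trans_le hle⟩

theorem stmt15 (ε : ℝ) (hε : 0 < ε) :
    ∃ x : ℝ, 0 < x ∧ x < ε ∧ deriv c0 x = 0 ∧ 0 < c0 x := by
  obtain ⟨n, hn⟩ := exists_nat_gt (π * ε)⁻¹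
  have hn0 : 0 < n := Nat.cast_pos.mp ((inv_pos.mpr (by positivity)).trans hn)
  have hsmall : (n * π)⁻¹ < ε := by
    have h := (inv_lt_iff_one_lt_mul₀ (by positivity)).mp hn
    rw [inv_lt_iff_one_lt_mul₀ (by positivity)]
    linarith [show ε * (n * π) = n * (π * ε) by ring]
  obtain ⟨x, hx, hcrit, hpos⟩ := exists_deriv_c0_eq_zero_mem_Ioo n hn0
  exact ⟨x, lt_trans (by positivity) hx.1, hx.2.trans hsmall, hcrit, hpos⟩
end

section
/- There exist real numbers p₁ > 0, p₂ > 0, r₁ > 0, r₂ > 0, r₁₂ > 0 and T > 0 such that, writing S₁ = {(x₁, x₂) ∈ ℝ² : x₁ = c₀(x₂)} and S₂ = {(x₁, x₂) ∈ ℝ² : (x₁−p₁)²/r₁ + (x₂−p₂)²/r₂ = r₁₂}: (a) S₁ ∩ S₂ = {(0,0), (c₀(T), T)}; (b) T > p₂ and the intersection of the open ellipse disk {(x₁, x₂) : (x₁−p₁)²/r₁ + (x₂−p₂)²/r₂ < r₁₂} with S₁ equals {(c₀(t), t) : 0 < t < T}; (c) at each of the two points (0,0) and (c₀(T), T), the vectors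 (1, −deriv c₀ (x₂)) and ((x₁−p₁)/r₁, (x₂−p₂)/r₂) are linearly independent in ℝ²; (d) the open region {(x₁, x₂) : c₀(x₂) < x₁ and (x₁−p₁)²/r₁ + (x₂−p₂)²/r₂ < r₁₂} is nonempty. -/
/-!
Take the ellipse `(x₁ - 1)²/100 + (x₂ - π⁻¹/2)² = 1/100 + (π⁻¹/2)²`, which passes through `(0, 0)`
and `(0, π⁻¹) = (c₀(π⁻¹), π⁻¹)`. On the graph `x₁ = c₀(t)` its left side minus its right side is
`t (t - π⁻¹) + c₀(t) (c₀(t) - 2) / 100`, whose sign is read off from `t c₀(t) ≥ 0` and `c₀(t) ≤ t`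
for `t ≤ π⁻¹`, and beyond `π⁻¹` from `c₀(t) ≤ t |sin (1/t) - sin π| ≤ π (t - π⁻¹)`.
At both intersection points `c₀' = 0` (`c₀ = O(t³)` at `0`, and `sin² (1/t)` has a double zero at
`π⁻¹`), while the normal of the ellipse there has a nonzero second coordinate.
-/

open Real Set Asymptotics

lemma inv_pi_lt_one : π⁻¹ < 1 := inv_lt_one_of_one_lt₀ (by linarith [pi_gt_three])

lemma c0_eq (t : ℝ) : c0 t = t * (exp (-1 / t ^ 2) * sin (1 / t) ^ 2) := by
  by_cases ht : t = 0
  · simp [c0, ht]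
  · simp only [c0, ht, if_false]; ring

lemma c0_zero : c0 0 = 0 := by simp [c0]

lemma c0_inv_pi : c0 π⁻¹ = 0 := by simp [c0_eq]

lemma c0_nonneg {t : ℝ} (ht : 0 ≤ t) : 0 ≤ c0 t := by
  rw [c0_eq]; positivity

lemma c0_nonpos {t : ℝ} (ht : t ≤ 0) : c0 t ≤ 0 := by
  rw [c0_eq]
  exact mul_nonpos_of_nonpos_of_nonneg ht (by positivity)

lemma exp_neg_one_div_sq_le_one (t : ℝ) : exp (-1 / t ^ 2) ≤ 1 :=
  exp_le_one_iff.mpr (div_nonpos_of_nonpos_of_nonneg (by norm_num) (sq_nonneg t))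

lemma c0_le_self {t : ℝ} (ht : 0 ≤ t) : c0 t ≤ t := by
  rw [c0_eq]
  exact mul_le_of_le_one_right ht
    (mul_le_one₀ (exp_neg_one_div_sq_le_one t) (sq_nonneg _) (sin_sq_le_one _))

lemma c0_le_pi_mul_sub_inv_pi {t : ℝ} (ht : π⁻¹ ≤ t) : c0 t ≤ π * (t - π⁻¹) := by
  have ht0 : 0 < t := (inv_pos.mpr pi_pos).trans_le ht
  have hsin : sin (1 / t) ^ 2 ≤ π - 1 / t := calc
    sin (1 / t) ^ 2 ≤ |sin (1 / t) - sin π| := by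
      rw [sin_pi, sub_zero, ← sq_abs]
      exact pow_le_of_le_one (abs_nonneg _) (abs_sin_le_one _) two_ne_zero
    _ ≤ |1 / t - π| := abs_sin_sub_sin_le _ _
    _ = π - 1 / t := by
      have : 1 / t ≤ π := (one_div_le ht0 pi_pos).mpr (by simpa using ht)
      rw [abs_sub_comm, abs_of_nonneg (sub_nonneg.mpr this)]
  calc c0 t ≤ t * sin (1 / t) ^ 2 := by
        rw [c0_eq]
        exact mul_le_mul_of_nonneg_left
          (mul_le_of_le_one_left (sq_nonneg _) (exp_neg_one_div_sq_le_one t)) ht0.le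
    _ ≤ t * (π - 1 / t) := mul_le_mul_of_nonneg_left hsin ht0.le
    _ = π * (t - π⁻¹) := by field_simp

lemma exp_neg_one_div_sq_le_sq (t : ℝ) (ht : t ≠ 0) : exp (-1 / t ^ 2) ≤ t ^ 2 := by
  have h := add_one_le_exp (1 / t ^ 2)
  rw [neg_div, exp_neg, inv_le_comm₀ (exp_pos _) (by positivity)]
  calc (t ^ 2)⁻¹ = 1 / t ^ 2 := (one_div _).symm
    _ ≤ exp (1 / t ^ 2) := by linarith

lemma abs_c0_le (t : ℝ) : |c0 t| ≤ |t| ^ 3 := by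
  rcases eq_or_ne t 0 with rfl | ht
  · simp [c0_zero]
  rw [c0_eq, abs_mul, abs_mul, abs_of_pos (exp_pos _), abs_of_nonneg (sq_nonneg (sin _))]
  calc |t| * (exp (-1 / t ^ 2) * sin (1 / t) ^ 2) ≤ |t| * (t ^ 2 * 1) := by
        gcongr
        · exact exp_neg_one_div_sq_le_sq t ht
        · exact sin_sq_le_one _
    _ = |t| ^ 3 := by rw [← sq_abs]; ring

lemma hasDerivAt_c0_zero : HasDerivAt c0 0 0 := by
  rw [hasDerivAt_iff_isLittleO_nhds_zero]
  simp only [zero_add, c0_zero, sub_zero, smul_zero]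
  refine IsBigO.trans_isLittleO (IsBigO.of_bound 1 ?_) (isLittleO_pow_id (n := 3) (by norm_num))
  filter_upwards with t
  simpa using abs_c0_le t

lemma DifferentiableAt.hasDerivAt_mul_sq_of_eq_zero {u v : ℝ → ℝ} {x : ℝ}
    (hu : DifferentiableAt ℝ u x) (hv : DifferentiableAt ℝ v x) (h : v x = 0) : HasDerivAt (fun y => u y * v y ^ 2) 0 x := by
  simpa [h] using hu.hasDerivAt.fun_mul (hv.hasDerivAt.fun_pow 2)

lemma hasDerivAt_c0_inv_pi : HasDerivAt c0 0 π⁻¹ := by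
  rw [show c0 = fun t => exp (-1 / t ^ 2) * t * sin (1 / t) ^ 2 from
    funext fun t => (c0_eq t).trans (by ring)]
  exact DifferentiableAt.hasDerivAt_mul_sq_of_eq_zero (by fun_prop (disch := positivity))
    (by fun_prop (disch := positivity)) (by simp)

lemma linearIndependent_one_pair {K : Type*} [Field K] {c a b : K} (h : b ≠ a * c) :
    LinearIndependent K ![((1 : K), c), (a, b)] := by
  rw [LinearIndependent.pair_iff' (by simp)]
  intro s hs
  simp only [Prod.smul_mk, smul_eq_mul, mul_one, Prod.mk.injEq] at hs
  exact h (hs.1 ▸ hs.2.symm)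

section SignPattern

variable {f : ℝ → ℝ} {a b : ℝ}

lemma setOf_eq_zero_eq_pair_of_sign_pattern (hlt : ∀ t < a, 0 < f t)
    (hmid : ∀ t ∈ Ioo a b, f t < 0) (hgt : ∀ t > b, 0 < f t) (ha : f a = 0) (hb : f b = 0) :
    {t | f t = 0} = {a, b} := by
  ext t
  simp only [mem_ofPred_eq, mem_insert_iff, mem_singleton_iff]
  refine ⟨fun h => ?_, by rintro (rfl | rfl) <;> assumption⟩
  by_contra! hne
  rcases hne.1.lt_or_gt with hta | hta
  · exact (hlt t hta).ne' h
  rcases hne.2.lt_or_gt with htb | htb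
  · exact (hmid t ⟨hta, htb⟩).ne h
  · exact (hgt t htb).ne' h

lemma setOf_neg_eq_Ioo_of_sign_pattern (hlt : ∀ t < a, 0 < f t)
    (hmid : ∀ t ∈ Ioo a b, f t < 0) (hgt : ∀ t > b, 0 < f t) (ha : f a = 0) (hb : f b = 0) :
    {t | f t < 0} = Ioo a b := by
  refine Subset.antisymm (fun t (h : f t < 0) => ⟨?_, ?_⟩) hmid
  · by_contra! hta
    rcases hta.lt_or_eq with hta | rfl
    · exact (hlt t hta).not_gt h
    · exact h.ne ha
  · by_contra! htb
    rcases htb.lt_or_eq with htb | rfl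
    · exact (hgt t htb).not_gt h
    · exact h.ne hb

end SignPattern

-- The `/ 1` keeps the shape `(x₁ - p₁)² / r₁ + (x₂ - p₂)² / r₂` of the theorem, with `r₂ = 1`.
noncomputable def ellipseQ (q : ℝ × ℝ) : ℝ := (q.1 - 1) ^ 2 / 100 + (q.2 - π⁻¹ / 2) ^ 2 / 1

noncomputable def ellipseExcess (t : ℝ) : ℝ := t * (t - π⁻¹) + c0 t * (c0 t - 2) / 100

lemma ellipseQ_graph (t : ℝ) :
    ellipseQ (c0 t, t) = 1 / 100 + (π⁻¹ / 2) ^ 2 + ellipseExcess t := by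
  unfold ellipseQ ellipseExcess; ring

lemma ellipseExcess_pos_of_neg {t : ℝ} (ht : t < 0) : 0 < ellipseExcess t := by
  have hc := c0_nonpos ht.le
  have : 0 < t * (t - π⁻¹) := mul_pos_of_neg_of_neg ht (by linarith [inv_pos.mpr pi_pos])
  unfold ellipseExcess; nlinarith

lemma ellipseExcess_neg_of_mem_Ioo {t : ℝ} (ht : t ∈ Ioo 0 π⁻¹) : ellipseExcess t < 0 := by
  have hc := c0_nonneg ht.1.le
  have hct := c0_le_self ht.1.le
  have := inv_pi_lt_one
  have : t * (t - π⁻¹) < 0 := mul_neg_of_pos_of_neg ht.1 (by linarith [ht.2])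
  have : c0 t * (c0 t - 2) ≤ 0 := mul_nonpos_of_nonneg_of_nonpos hc (by linarith [ht.2])
  unfold ellipseExcess; linarith

lemma ellipseExcess_pos_of_gt {t : ℝ} (ht : π⁻¹ < t) : 0 < ellipseExcess t := by
  have hc := c0_le_pi_mul_sub_inv_pi ht.le
  have hπ : 2 * π / 100 < π⁻¹ := by
    rw [div_lt_iff₀ (by norm_num), inv_mul_eq_div, lt_div_iff₀ pi_pos]
    nlinarith [mul_self_lt_mul_self pi_pos.le pi_lt_d2]
  have := mul_pos (sub_pos.mpr ht) (sub_pos.mpr (hπ.trans ht))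
  unfold ellipseExcess; nlinarith [sq_nonneg (c0 t)]

lemma ellipseExcess_zero : ellipseExcess 0 = 0 := by simp [ellipseExcess, c0_zero]

lemma ellipseExcess_inv_pi : ellipseExcess π⁻¹ = 0 := by simp [ellipseExcess, c0_inv_pi]

lemma setOf_ellipseExcess_eq_zero : {t | ellipseExcess t = 0} = {0, π⁻¹} :=
  setOf_eq_zero_eq_pair_of_sign_pattern (fun _ => ellipseExcess_pos_of_neg)
    (fun _ => ellipseExcess_neg_of_mem_Ioo) (fun _ => ellipseExcess_pos_of_gt)
    ellipseExcess_zero ellipseExcess_inv_pi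

lemma setOf_ellipseExcess_neg : {t | ellipseExcess t < 0} = Ioo 0 π⁻¹ :=
  setOf_neg_eq_Ioo_of_sign_pattern (fun _ => ellipseExcess_pos_of_neg)
    (fun _ => ellipseExcess_neg_of_mem_Ioo) (fun _ => ellipseExcess_pos_of_gt)
    ellipseExcess_zero ellipseExcess_inv_pi

lemma graph_inter_eq_image (f : ℝ → ℝ) (P : ℝ × ℝ → Prop) :
    {q : ℝ × ℝ | q.1 = f q.2} ∩ {q | P q} = (fun t => (f t, t)) '' {t | P (f t, t)} := by
  ext ⟨x, y⟩
  constructor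
  · rintro ⟨(rfl : x = f y), h⟩
    exact ⟨y, h, rfl⟩
  · rintro ⟨t, h, ht⟩
    cases ht
    exact ⟨rfl, h⟩

theorem stmt16 :
    ∃ p₁ p₂ r₁ r₂ r₁₂ T : ℝ,
      0 < p₁ ∧ 0 < p₂ ∧ 0 < r₁ ∧ 0 < r₂ ∧ 0 < r₁₂ ∧ 0 < T ∧
      -- (a)
      {q : ℝ × ℝ | q.1 = c0 q.2} ∩
          {q : ℝ × ℝ | (q.1 - p₁) ^ 2 / r₁ + (q.2 - p₂) ^ 2 / r₂ = r₁₂} =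
        {((0 : ℝ), (0 : ℝ)), (c0 T, T)} ∧
      -- (b)
      T > p₂ ∧
      {q : ℝ × ℝ | (q.1 - p₁) ^ 2 / r₁ + (q.2 - p₂) ^ 2 / r₂ < r₁₂} ∩
          {q : ℝ × ℝ | q.1 = c0 q.2} =
        {q : ℝ × ℝ | ∃ t : ℝ, 0 < t ∧ t < T ∧ q = (c0 t, t)} ∧
      -- (c)
      (∀ q ∈ ({((0 : ℝ), (0 : ℝ)), (c0 T, T)} : Set (ℝ × ℝ)),
        LinearIndependent ℝ
          ![((1 : ℝ), -deriv c0 q.2), ((q.1 - p₁) / r₁, (q.2 - p₂) / r₂)]) ∧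
      -- (d)
      {q : ℝ × ℝ |
        c0 q.2 < q.1 ∧ (q.1 - p₁) ^ 2 / r₁ + (q.2 - p₂) ^ 2 / r₂ < r₁₂}.Nonempty := by
  have hπ : 0 < π⁻¹ := inv_pos.mpr pi_pos
  refine ⟨1, π⁻¹ / 2, 100, 1, 1 / 100 + (π⁻¹ / 2) ^ 2, π⁻¹, by norm_num, by positivity,
    by norm_num, by norm_num, by positivity, hπ, ?_, by linarith, ?_, ?_, ?_⟩
  · change _ ∩ {q | ellipseQ q = _} = _
    simp only [graph_inter_eq_image, ellipseQ_graph, add_eq_left, setOf_ellipseExcess_eq_zero,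
      image_pair, c0_zero]
  · change {q | ellipseQ q < _} ∩ _ = _
    rw [inter_comm, graph_inter_eq_image]
    simp only [ellipseQ_graph, add_lt_iff_neg_left, setOf_ellipseExcess_neg]
    ext q
    simp [eq_comm, and_assoc]
  · rintro q (rfl | rfl) <;> refine linearIndependent_one_pair ?_
    · simp [hasDerivAt_c0_zero.deriv, hπ.ne']
    · simp [hasDerivAt_c0_inv_pi.deriv, sub_half, hπ.ne']
  · refine ⟨(1, π⁻¹ / 2), ?_, ?_⟩
    · exact (c0_le_self (by positivity)).trans_lt (by linarith [inv_pi_lt_one])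
    · simpa using (by positivity : (0 : ℝ) < 1 / 100 + (π⁻¹ / 2) ^ 2)
end

section
/- For all integers m₁, m₂ > 1, all reals p₁, p₂ and all reals r₁, r₂, r₁₂ > 0, the zero set E⁻¹(0,0) is a compact subset of ℝ × ℝ × (Fin m₁ → ℝ) × (Fin m₂ → ℝ). -/
noncomputable def E (m₁ m₂ : ℕ) (p₁ p₂ r₁ r₂ r₁₂ : ℝ) :
    ℝ × ℝ × (Fin m₁ → ℝ) × (Fin m₂ → ℝ) → ℝ × ℝ :=
  fun p =>
    ((p.1 - c0 p.2.1) - ∑ j, (p.2.2.1 j) ^ 2,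
      r₁₂ - ((p.1 - p₁) ^ 2 / r₁ + (p.2.1 - p₂) ^ 2 / r₂) - ∑ j, (p.2.2.2 j) ^ 2)

open Metric Topology

lemma abs_c0_le_s17 (x : ℝ) : |c0 x| ≤ |x| := by
  unfold c0
  split_ifs with hx
  · simp
  · have hexp : Real.exp (-1 / x ^ 2) ≤ 1 :=
      Real.exp_le_one_iff.mpr (div_nonpos_of_nonpos_of_nonneg (by norm_num) (sq_nonneg x))
    rw [abs_mul, abs_mul, abs_of_pos (Real.exp_pos _),
      abs_of_nonneg (sq_nonneg (Real.sin (1 / x)))]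
    calc Real.exp (-1 / x ^ 2) * |x| * Real.sin (1 / x) ^ 2
        ≤ Real.exp (-1 / x ^ 2) * |x| :=
          mul_le_of_le_one_right (by positivity) (Real.sin_sq_le_one _)
      _ ≤ |x| := mul_le_of_le_one_left (abs_nonneg x) hexp

@[fun_prop]
lemma continuous_c0 : Continuous c0 := by
  rw [continuous_iff_continuousAt]
  intro a
  by_cases ha : a = 0
  · subst ha
    rw [ContinuousAt, show c0 0 = 0 by simp [c0]]
    refine squeeze_zero_norm (fun x => by simpa using abs_c0_le_s17 x) ?_
    simpa using continuous_abs.tendsto (0 : ℝ)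
  · have heq : (fun x => Real.exp (-1 / x ^ 2) * x * Real.sin (1 / x) ^ 2) =ᶠ[𝓝 a] c0 := by
      filter_upwards [isOpen_ne.mem_nhds ha] with x hx
      simp [c0, hx]
    have ha2 : a ^ 2 ≠ 0 := pow_ne_zero 2 ha
    exact ContinuousAt.congr (by fun_prop (disch := assumption)) heq

lemma continuous_E (m₁ m₂ : ℕ) (p₁ p₂ r₁ r₂ r₁₂ : ℝ) :
    Continuous (E m₁ m₂ p₁ p₂ r₁ r₂ r₁₂) := by
  unfold E
  fun_prop

lemma norm_le_sqrt_of_sum_sq_le {ι : Type*} [Fintype ι] {f : ι → ℝ} {c : ℝ}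
    (h : ∑ i, f i ^ 2 ≤ c) : ‖f‖ ≤ √c :=
  (pi_norm_le_iff_of_nonneg (Real.sqrt_nonneg c)).2 fun i => by
    rw [Real.norm_eq_abs]
    exact Real.abs_le_sqrt
      ((Finset.single_le_sum (fun j _ => sq_nonneg (f j)) (Finset.mem_univ i)).trans h)

lemma abs_sub_le_sqrt_of_sq_div_le {x p r c : ℝ} (hr : 0 < r) (h : (x - p) ^ 2 / r ≤ c) :
    |x - p| ≤ √(r * c) :=
  Real.abs_le_sqrt (by rwa [div_le_iff₀ hr, mul_comm] at h)

section ZeroSet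

variable {m₁ m₂ : ℕ} {p₁ p₂ r₁ r₂ r₁₂ : ℝ}

lemma E_eq_zero_iff {x₁ x₂ : ℝ} {y : Fin m₁ → ℝ} {z : Fin m₂ → ℝ} :
    E m₁ m₂ p₁ p₂ r₁ r₂ r₁₂ (x₁, x₂, y, z) = (0, 0) ↔
      ∑ j, y j ^ 2 = x₁ - c0 x₂ ∧
        (x₁ - p₁) ^ 2 / r₁ + (x₂ - p₂) ^ 2 / r₂ + ∑ j, z j ^ 2 = r₁₂ := by
  simp only [E, Prod.mk.injEq]
  constructor <;> rintro ⟨h₁, h₂⟩ <;> constructor <;> linarith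

lemma zero_set_subset_closedBall_prod (hr₁ : 0 < r₁) (hr₂ : 0 < r₂) :
    {p | E m₁ m₂ p₁ p₂ r₁ r₂ r₁₂ p = (0, 0)} ⊆
      closedBall p₁ √(r₁ * r₁₂) ×ˢ closedBall p₂ √(r₂ * r₁₂) ×ˢ
        closedBall 0 √(|p₁| + √(r₁ * r₁₂) + (|p₂| + √(r₂ * r₁₂))) ×ˢ
          closedBall 0 √r₁₂ := by
  rintro ⟨x₁, x₂, y, z⟩ hp
  obtain ⟨hy, hz⟩ := E_eq_zero_iff.1 hp
  have h₁ : 0 ≤ (x₁ - p₁) ^ 2 / r₁ := by positivity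
  have h₂ : 0 ≤ (x₂ - p₂) ^ 2 / r₂ := by positivity
  have hz₀ : 0 ≤ ∑ j, z j ^ 2 := by positivity
  have hx₁ : |x₁ - p₁| ≤ √(r₁ * r₁₂) :=
    abs_sub_le_sqrt_of_sq_div_le hr₁ (by linarith)
  have hx₂ : |x₂ - p₂| ≤ √(r₂ * r₁₂) :=
    abs_sub_le_sqrt_of_sq_div_le hr₂ (by linarith)
  have hy' : ∑ j, y j ^ 2 ≤ |p₁| + √(r₁ * r₁₂) + (|p₂| + √(r₂ * r₁₂)) := by
    rw [hy]
    linarith [le_abs_self x₁, neg_abs_le (c0 x₂), abs_c0_le_s17 x₂,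
      abs_sub_abs_le_abs_sub x₁ p₁, abs_sub_abs_le_abs_sub x₂ p₂]
  simp only [Set.mem_prod, mem_closedBall, dist_zero_right, Real.dist_eq]
  exact ⟨hx₁, hx₂, norm_le_sqrt_of_sum_sq_le hy', norm_le_sqrt_of_sum_sq_le (by linarith)⟩

end ZeroSet

theorem stmt17_general (m₁ m₂ : ℕ)
    (p₁ p₂ r₁ r₂ r₁₂ : ℝ) (hr₁ : 0 < r₁) (hr₂ : 0 < r₂) :
    IsCompact {p : ℝ × ℝ × (Fin m₁ → ℝ) × (Fin m₂ → ℝ) |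
      E m₁ m₂ p₁ p₂ r₁ r₂ r₁₂ p = (0, 0)} :=
  ((isCompact_closedBall _ _).prod <| (isCompact_closedBall _ _).prod <|
      (isCompact_closedBall _ _).prod (isCompact_closedBall _ _)).of_isClosed_subset
    (isClosed_singleton.preimage (continuous_E m₁ m₂ p₁ p₂ r₁ r₂ r₁₂))
    (zero_set_subset_closedBall_prod hr₁ hr₂)

theorem stmt17 (m₁ m₂ : ℕ) (hm₁ : 1 < m₁) (hm₂ : 1 < m₂)
    (p₁ p₂ r₁ r₂ r₁₂ : ℝ) (hr₁ : 0 < r₁) (hr₂ : 0 < r₂) (hr₁₂ : 0 < r₁₂) :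
    IsCompact {p : ℝ × ℝ × (Fin m₁ → ℝ) × (Fin m₂ → ℝ) |
      E m₁ m₂ p₁ p₂ r₁ r₂ r₁₂ p = (0, 0)} :=
  stmt17_general m₁ m₂ p₁ p₂ r₁ r₂ r₁₂ hr₁ hr₂
end
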